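/- Let r : ℕ → (0,∞) satisfy r(n) ≥ 9.27·√(log n) for all sufficiently large n. Then for the random geometric graph G ∈ 𝒢(n, r(n)), the probability that χ_c(G) = 2 tends to 1 as n → ∞. -/

import Mathlib

/-!
Let `u ≈ 3/4 √(log n)` and cut the square into columns of width `u` and overlapping rows of
height `2u`; colour the plane by vertical strips of width `2u`, alternately. A cell has area
`2u² ≥ 9/8 log n`, so with high probability every one of the `O(n / log n)` cells contains a
point. A maximal clique has diameter at most `r`, hence (Helly) lies in a disc of radius `2r/3`
centred in the square; within `√13 u < 11u/3 ≤ r/3` of that centre there is a cell of the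
other strip colour, and its point would extend the clique. So the strip colouring is a clique
colouring, and the graph has an edge, whence `χ_c = 2`.
-/

open Filter MeasureTheory SimpleGraph

set_option linter.unusedVariables false

/-- A clique colouring with `k` colours: no maximal clique containing at least
two vertices is monochromatic. -/
def IsCliqueColouring {V : Type*} {k : ℕ} (G : SimpleGraph V) (c : V → Fin k) : Prop :=
  ∀ S : Set V, Maximal G.IsClique S → 2 ≤ S.ncard → ¬ ∃ a : Fin k, ∀ v ∈ S, c v = a

/-- The clique chromatic number: the least number of colours in a clique colouring. -/
noncomputable def cliqueChromNum {V : Type*} (G : SimpleGraph V) : ℕ :=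
  sInf {k : ℕ | ∃ c : V → Fin k, IsCliqueColouring G c}

/-- The geometric graph on `n` points of the plane with threshold `r`. -/
def geomGraph {n : ℕ} (r : ℝ) (x : Fin n → EuclideanSpace ℝ (Fin 2)) : SimpleGraph (Fin n) where
  Adj i j := i ≠ j ∧ dist (x i) (x j) ≤ r
  symm := ⟨fun i j h => ⟨h.1.symm, dist_comm (x i) (x j) ▸ h.2⟩⟩
  loopless := ⟨fun i h => h.1 rfl⟩

/-- The square `S_n = [-√n/2, √n/2]²`. -/
def rggSquare (n : ℕ) : Set (EuclideanSpace ℝ (Fin 2)) :=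
  {p | ∀ i, |p i| ≤ Real.sqrt n / 2}

/-- The distribution of `n` points sampled independently and uniformly at random from
the square `S_n`: the product over `Fin n` of Lebesgue measure restricted to `S_n`,
normalised by the area `n` of `S_n` (one factor `n⁻¹` for each of the `n` points). -/
noncomputable def rggMeasure (n : ℕ) : Measure (Fin n → EuclideanSpace ℝ (Fin 2)) :=
  ((n : ENNReal)⁻¹) ^ n • Measure.pi (fun _ : Fin n => volume.restrict (rggSquare n))

open Metric Module Finset

section Jung

variable {E : Type*} [NormedAddCommGroup E] [NormedSpace ℝ E] {ι : Type*} {K : Finset ι}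
  {C : Set E} {x : ι → E} {r : ℝ}

theorem exists_mem_convex_dist_le_card_sub_one_div_card (hK : K.Nonempty) (hC : Convex ℝ C)
    (hxC : ∀ i ∈ K, x i ∈ C) (hr : ∀ i ∈ K, ∀ j ∈ K, dist (x i) (x j) ≤ r) :
    ∃ z ∈ C, ∀ i ∈ K, dist z (x i) ≤ ((#K : ℝ) - 1) / #K * r := by
  classical
  have hcard : (0 : ℝ) < #K := by exact_mod_cast hK.card_pos
  have hw : ∑ _j ∈ K, (#K : ℝ)⁻¹ = 1 := by
    rw [sum_const, nsmul_eq_mul, mul_inv_cancel₀ hcard.ne']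
  refine ⟨∑ j ∈ K, (#K : ℝ)⁻¹ • x j,
    hC.sum_mem (fun _ _ => by positivity) hw hxC, fun i hi => ?_⟩
  have hcentre : ∑ j ∈ K, (#K : ℝ)⁻¹ • x j - x i = ∑ j ∈ K, (#K : ℝ)⁻¹ • (x j - x i) := by
    simp only [smul_sub, sum_sub_distrib, ← sum_smul, hw, one_smul]
  calc dist (∑ j ∈ K, (#K : ℝ)⁻¹ • x j) (x i)
      ≤ ∑ j ∈ K, (#K : ℝ)⁻¹ * dist (x j) (x i) := by
        rw [dist_eq_norm, hcentre]
        refine (norm_sum_le _ _).trans_eq (sum_congr rfl fun j _ => ?_)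
        rw [norm_smul, Real.norm_of_nonneg (by positivity), dist_eq_norm]
    _ = (#K : ℝ)⁻¹ * ∑ j ∈ K.erase i, dist (x j) (x i) := by
        rw [← mul_sum, sum_erase K (f := fun j => dist (x j) (x i)) (dist_self _)]
    _ ≤ (#K : ℝ)⁻¹ * ∑ _j ∈ K.erase i, r := by
        gcongr with j hj
        exact hr j (mem_of_mem_erase hj) i hi
    _ = ((#K : ℝ) - 1) / #K * r := by
        rw [sum_const, card_erase_of_mem hi, nsmul_eq_mul,
          Nat.cast_sub (hK.card_pos : 1 ≤ #K)]
        field_simp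
        push_cast
        ring

/-- A weak form of Jung's theorem: by Helly's theorem it suffices to treat `d + 1` points, and for
those the centroid works. -/
theorem exists_mem_convex_dist_le_finrank_div [FiniteDimensional ℝ E] (hK : K.Nonempty)
    (hC : Convex ℝ C) (hxC : ∀ i ∈ K, x i ∈ C) (hr : ∀ i ∈ K, ∀ j ∈ K, dist (x i) (x j) ≤ r) :
    ∃ z ∈ C, ∀ i ∈ K, dist z (x i) ≤ finrank ℝ E / (finrank ℝ E + 1) * r := by
  obtain ⟨i₀, hi₀⟩ := hK
  have hr₀ : 0 ≤ r := dist_nonneg.trans (hr i₀ hi₀ i₀ hi₀)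
  obtain ⟨z, hz⟩ := Convex.helly_theorem' (s := K)
    (F := fun i => C ∩ closedBall (x i) (finrank ℝ E / (finrank ℝ E + 1) * r))
    (fun i _ => hC.inter (convex_closedBall _ _)) fun I hIK hI => by
      rcases I.eq_empty_or_nonempty with rfl | hIne
      · simp
      obtain ⟨z, hzC, hz⟩ := exists_mem_convex_dist_le_card_sub_one_div_card hIne hC
        (fun i hi => hxC i (hIK hi)) fun i hi j hj => hr i (hIK hi) j (hIK hj)
      have hratio : ((#I : ℝ) - 1) / #I ≤ finrank ℝ E / (finrank ℝ E + 1) := by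
        have h1 : (1 : ℝ) ≤ #I := by exact_mod_cast hIne.card_pos
        have h2 : (#I : ℝ) ≤ finrank ℝ E + 1 := by exact_mod_cast hI
        rw [div_le_div_iff₀ (by linarith) (by positivity)]
        nlinarith
      refine ⟨z, Set.mem_iInter₂.mpr fun i hi => ⟨hzC, ?_⟩⟩
      rw [mem_closedBall]
      exact (hz i hi).trans (mul_le_mul_of_nonneg_right hratio hr₀)
  simp only [Set.mem_iInter₂, Set.mem_inter_iff, mem_closedBall] at hz
  exact ⟨z, (hz i₀ hi₀).1, fun i hi => (hz i hi).2⟩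

end Jung

section CliqueColouring

variable {V : Type*} [Finite V] {G : SimpleGraph V} {v w : V}

theorem two_le_of_isCliqueColouring {k : ℕ} {c : V → Fin k} (hc : IsCliqueColouring G c)
    (hvw : G.Adj v w) : 2 ≤ k := by
  obtain ⟨M, hvwM, hM⟩ := Finite.exists_le_maximal (isClique_pair.mpr fun _ => hvw)
  have hM₂ : 2 ≤ M.ncard :=
    (Set.ncard_pair hvw.ne).symm.le.trans (Set.ncard_le_ncard hvwM (Set.toFinite M))
  by_contra! hk
  interval_cases k
  · exact (c v).elim0
  · exact hc M hM hM₂ ⟨c v, fun _ _ => Subsingleton.elim _ _⟩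

theorem cliqueChromNum_eq_two {c : V → Fin 2} (hc : IsCliqueColouring G c) (hvw : G.Adj v w) :
    cliqueChromNum G = 2 :=
  (Nat.sInf_le (⟨c, hc⟩ : ∃ c : V → Fin 2, IsCliqueColouring G c)).antisymm
    (le_csInf ⟨2, c, hc⟩ fun _ ⟨_, hc'⟩ => two_le_of_isCliqueColouring hc' hvw)

end CliqueColouring

local notation "Pt" => EuclideanSpace ℝ (Fin 2)

section GeomGraph

variable {n k : ℕ} {r : ℝ} {x : Fin n → Pt} {C : Set Pt}

/-- Any maximal clique has a centre within `2r/3` of all its points, so a vertex of another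
colour within `r/3` of that centre would extend the clique. -/
theorem isCliqueColouring_geomGraph (hr : 0 ≤ r) (hC : Convex ℝ C) (hxC : ∀ t, x t ∈ C)
    {c : Fin n → Fin k} (hc : ∀ z ∈ C, ∀ a, ∃ t, c t ≠ a ∧ dist (x t) z ≤ r / 3) :
    IsCliqueColouring (geomGraph r x) c := by
  classical
  rintro S hS hS₂ ⟨a, ha⟩
  have hSne : S.toFinset.Nonempty :=
    Set.toFinset_nonempty.mpr (Set.nonempty_of_ncard_ne_zero (by omega))
  have hdiam : ∀ i ∈ S.toFinset, ∀ j ∈ S.toFinset, dist (x i) (x j) ≤ r := by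
    intro i hi j hj
    rcases eq_or_ne i j with rfl | hij
    · simpa using hr
    · exact (hS.prop (Set.mem_toFinset.mp hi) (Set.mem_toFinset.mp hj) hij).2
  obtain ⟨z, hzC, hz⟩ := exists_mem_convex_dist_le_finrank_div hSne hC (fun t _ => hxC t) hdiam
  rw [finrank_euclideanSpace_fin] at hz
  obtain ⟨t, hta, htz⟩ := hc z hzC a
  have htS : (geomGraph r x).IsClique (insert t S) := hS.prop.insert fun v hv htv => by
    refine ⟨htv, ?_⟩
    calc dist (x t) (x v) ≤ dist (x t) z + dist z (x v) := dist_triangle _ _ _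
      _ ≤ r / 3 + 2 / (2 + 1) * r := add_le_add htz (by exact_mod_cast hz v (by simpa using hv))
      _ = r := by ring
  exact hta (ha t (hS.mem_of_prop_insert htS))

theorem cliqueChromNum_geomGraph_eq_two (hr : 0 ≤ r) (hC : Convex ℝ C) (hCne : C.Nonempty)
    (hxC : ∀ t, x t ∈ C) {c : Fin n → Fin 2}
    (hc : ∀ z ∈ C, ∀ a, ∃ t, c t ≠ a ∧ dist (x t) z ≤ r / 3) :
    cliqueChromNum (geomGraph r x) = 2 := by
  obtain ⟨z, hz⟩ := hCne
  obtain ⟨t, -, -⟩ := hc z hz 0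
  obtain ⟨t', ht't, ht'⟩ := hc (x t) (hxC t) (c t)
  exact cliqueChromNum_eq_two (isCliqueColouring_geomGraph hr hC hxC hc)
    (v := t') (w := t) ⟨fun h => ht't (congrArg c h), ht'.trans (by linarith)⟩

end GeomGraph

section Grid

theorem exists_nat_near {m : ℕ} (hm : 1 ≤ m) {s : ℝ} (hs₀ : 0 ≤ s) (hs : s ≤ 2 * m) :
    ∃ j < 2 * m - 1, s - 2 ≤ j ∧ (j : ℝ) ≤ s := by
  refine ⟨min ⌊s⌋₊ (2 * m - 2), by omega, ?_,
    (Nat.cast_le.mpr (min_le_left _ _)).trans (Nat.floor_le hs₀)⟩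
  rcases le_total ⌊s⌋₊ (2 * m - 2) with h | h
  · rw [min_eq_left h]
    linarith [Nat.lt_floor_add_one s]
  · rw [min_eq_right h, Nat.cast_sub (by omega)]
    push_cast
    linarith

/-- Among the columns `2k - 1, 2k, 2k + 2` around `s`, where `k = ⌊s / 2⌋` is clamped to the
last strip, one lies in a strip of either parity. -/
theorem exists_nat_near_of_parity {m : ℕ} (hm : 2 ≤ m) {s : ℝ} (hs₀ : 0 ≤ s) (hs : s ≤ 2 * m)
    (b : ℕ) : ∃ i < 2 * m, i / 2 % 2 = b % 2 ∧ s - 3 ≤ i ∧ (i : ℝ) ≤ s + 2 := by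
  set k := min ⌊s / 2⌋₊ (m - 1) with hk_def
  have hkm : k ≤ m - 1 := min_le_right _ _
  have hk_le : 2 * (k : ℝ) ≤ s := by
    have := (Nat.cast_le (α := ℝ).mpr (min_le_left ⌊s / 2⌋₊ (m - 1))).trans
      (Nat.floor_le (by positivity))
    linarith
  have hk_ge : s ≤ 2 * (k : ℝ) + 2 := by
    rcases le_total ⌊s / 2⌋₊ (m - 1) with h | h
    · rw [hk_def, min_eq_left h]
      linarith [Nat.lt_floor_add_one (s / 2)]
    · rw [hk_def, min_eq_right h, Nat.cast_sub (by omega)]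
      push_cast
      linarith
  by_cases hkb : k % 2 = b % 2
  · exact ⟨2 * k, by omega, by omega, by push_cast; linarith, by push_cast; linarith⟩
  by_cases hk : k + 1 ≤ m - 1
  · exact ⟨2 * k + 2, by omega, by omega, by push_cast; linarith, by push_cast; linarith⟩
  · have hcast : ((2 * k - 1 : ℕ) : ℝ) = 2 * k - 1 := by
      rw [Nat.cast_sub (by omega)]
      push_cast
      ring
    exact ⟨2 * k - 1, by omega, by omega, by rw [hcast]; linarith, by rw [hcast]; linarith⟩

/-- The cell in column `i` and row `j` of a grid on the square `[-mu, mu]²`: columns have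
width `u`, while rows have height `2u` and start at every multiple of `u`, so they overlap. -/
def gridCell (m : ℕ) (u : ℝ) (i j : ℕ) : Set Pt :=
  {p | p 0 ∈ Set.Ico ((i - m : ℝ) * u) ((i + 1 - m : ℝ) * u) ∧
    p 1 ∈ Set.Ico ((j - m : ℝ) * u) ((j + 2 - m : ℝ) * u)}

/-- Column `i` of the grid lies in the vertical strip `i / 2` of width `2u`; strips are
coloured alternately. -/
noncomputable def stripColour (m : ℕ) (u : ℝ) (p : Pt) : Fin 2 :=
  Fin.ofNat 2 (⌊p 0 / u + m⌋₊ / 2)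

def GridHit {n : ℕ} (m : ℕ) (u : ℝ) (x : Fin n → Pt) : Prop :=
  ∀ i < 2 * m, ∀ j < 2 * m - 1, ∃ t, x t ∈ gridCell m u i j

variable {m : ℕ} {u : ℝ}

theorem stripColour_of_mem_gridCell (hu : 0 < u) {i j : ℕ} {p : Pt} (hp : p ∈ gridCell m u i j) :
    stripColour m u p = Fin.ofNat 2 (i / 2) := by
  have h₁ := (le_div_iff₀ hu).mpr hp.1.1
  have h₂ := (div_lt_iff₀ hu).mpr hp.1.2
  rw [stripColour, (Nat.floor_eq_iff (n := i) (by linarith)).mpr ⟨by linarith, by linarith⟩]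

theorem dist_le_of_abs_sub_le {p q : Pt} {a b c : ℝ} (h₀ : |p 0 - q 0| ≤ a)
    (h₁ : |p 1 - q 1| ≤ b) (hc : 0 ≤ c) (habc : a ^ 2 + b ^ 2 ≤ c ^ 2) : dist p q ≤ c := by
  rw [EuclideanSpace.dist_eq, Fin.sum_univ_two, Real.dist_eq, Real.dist_eq, Real.sqrt_le_left hc,
    sq_abs, sq_abs]
  nlinarith [abs_nonneg (p 0 - q 0), abs_nonneg (p 1 - q 1), sq_abs (p 0 - q 0),
    sq_abs (p 1 - q 1)]

theorem exists_stripColour_ne_dist_le (hm : 2 ≤ m) (hu : 0 < u) {n : ℕ} {x : Fin n → Pt}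
    (hx : GridHit m u x) {z : Pt} (hz : ∀ k, |z k| ≤ m * u) (a : Fin 2) :
    ∃ t, stripColour m u (x t) ≠ a ∧ dist (x t) z ≤ 11 / 3 * u := by
  have hscaled : ∀ k, 0 ≤ z k / u + m ∧ z k / u + m ≤ 2 * m := fun k => by
    have h := abs_le.mp (hz k)
    rw [show z k / u + m = (z k + m * u) / u by field_simp]
    exact ⟨div_nonneg (by linarith) hu.le, (div_le_iff₀ hu).mpr (by linarith)⟩
  obtain ⟨i, hi, hib, hi₁, hi₂⟩ :=
    exists_nat_near_of_parity hm (hscaled 0).1 (hscaled 0).2 (a + 1)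
  obtain ⟨j, hj, hj₁, hj₂⟩ := exists_nat_near (by omega) (hscaled 1).1 (hscaled 1).2
  obtain ⟨t, ht⟩ := hx i hi j hj
  refine ⟨t, ?_, dist_le_of_abs_sub_le (a := 3 * u) (b := 2 * u) ?_ ?_ (by positivity)
    (by nlinarith)⟩
  · rw [stripColour_of_mem_gridCell hu ht, ne_eq, Fin.ext_iff, Fin.val_ofNat, hib]
    omega
  all_goals
    have hz_eq : ∀ k, z k = z k / u * u := fun k => (div_mul_cancel₀ _ hu.ne').symm
    obtain ⟨⟨h₀, h₀'⟩, h₁, h₁'⟩ := ht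
    rw [abs_le]
  · have := mul_le_mul_of_nonneg_right hi₁ hu.le
    have := mul_le_mul_of_nonneg_right hi₂ hu.le
    constructor <;> linarith [hz_eq 0]
  · have := mul_le_mul_of_nonneg_right hj₁ hu.le
    have := mul_le_mul_of_nonneg_right hj₂ hu.le
    constructor <;> linarith [hz_eq 1]

end Grid

theorem convex_rggSquare (n : ℕ) : Convex ℝ (rggSquare n) := by
  intro p hp q hq a b ha hb hab k
  calc |a * p k + b * q k| ≤ a * |p k| + b * |q k| := by
        refine (abs_add_le _ _).trans_eq ?_
        rw [abs_mul, abs_mul, abs_of_nonneg ha, abs_of_nonneg hb]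
    _ ≤ a * (√n / 2) + b * (√n / 2) := by gcongr <;> [exact hp k; exact hq k]
    _ = √n / 2 := by rw [← add_mul, hab, one_mul]

theorem cliqueChromNum_eq_two_of_gridHit {n m : ℕ} {u r : ℝ} {x : Fin n → Pt} (hm : 2 ≤ m)
    (hu : 0 < u) (hmu : √n = 2 * m * u) (hr : 11 * u ≤ r) (hxQ : ∀ t, x t ∈ rggSquare n)
    (hx : GridHit m u x) : cliqueChromNum (geomGraph r x) = 2 := by
  refine cliqueChromNum_geomGraph_eq_two (by linarith) (convex_rggSquare n)
    ⟨0, fun k => by simp; positivity⟩ hxQ (c := stripColour m u ∘ x) fun z hz a => ?_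
  have hz' : ∀ k, |z k| ≤ m * u := fun k => (hz k).trans_eq (by rw [hmu]; ring)
  obtain ⟨t, hta, htz⟩ := exists_stripColour_ne_dist_le hm hu hx hz' a
  exact ⟨t, hta, htz.trans (by linarith)⟩

section Probability

theorem volume_setOf_mem_and_mem (A B : Set ℝ) :
    volume {p : Pt | p 0 ∈ A ∧ p 1 ∈ B} = volume A * volume B := by
  have : {p : Pt | p 0 ∈ A ∧ p 1 ∈ B} =
      (MeasurableEquiv.toLp 2 (Fin 2 → ℝ)).symm ⁻¹' Set.univ.pi ![A, B] := by
    ext p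
    simp [Fin.forall_fin_two]
  rw [this,
    (EuclideanSpace.volume_preserving_symm_measurableEquiv_toLp (Fin 2)).measure_preimage_equiv,
    volume_pi, Measure.pi_pi, Fin.prod_univ_two]
  rfl

theorem measurableSet_setOf_mem_and_mem {A B : Set ℝ} (hA : MeasurableSet A)
    (hB : MeasurableSet B) : MeasurableSet {p : Pt | p 0 ∈ A ∧ p 1 ∈ B} :=
  (hA.preimage (by fun_prop)).inter (hB.preimage (by fun_prop))

theorem rggSquare_eq (n : ℕ) : rggSquare n =
    {p : Pt | p 0 ∈ Set.Icc (-(√n / 2)) (√n / 2) ∧ p 1 ∈ Set.Icc (-(√n / 2)) (√n / 2)} := by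
  ext p
  simp [rggSquare, Fin.forall_fin_two, abs_le]

theorem measurableSet_rggSquare (n : ℕ) : MeasurableSet (rggSquare n) :=
  rggSquare_eq n ▸ measurableSet_setOf_mem_and_mem measurableSet_Icc measurableSet_Icc

theorem volume_rggSquare (n : ℕ) : volume (rggSquare n) = n := by
  rw [rggSquare_eq, volume_setOf_mem_and_mem, Real.volume_Icc, sub_neg_eq_add, add_halves,
    ← ENNReal.ofReal_mul (Real.sqrt_nonneg _), Real.mul_self_sqrt (Nat.cast_nonneg n),
    ENNReal.ofReal_natCast]

instance (n : ℕ) : IsProbabilityMeasure (rggMeasure n) := by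
  constructor
  rw [rggMeasure, Measure.smul_apply, Measure.pi_univ]
  simp only [Measure.restrict_apply_univ, volume_rggSquare, prod_const, card_univ,
    Fintype.card_fin, smul_eq_mul, ← mul_pow]
  rcases n.eq_zero_or_pos with rfl | hn
  · simp
  · rw [ENNReal.inv_mul_cancel (by exact_mod_cast hn.ne') (ENNReal.natCast_ne_top n), one_pow]

theorem ae_mem_rggSquare (n : ℕ) : ∀ᵐ x ∂rggMeasure n, ∀ t, x t ∈ rggSquare n :=
  Measure.ae_smul_measure (ae_all_iff.mpr fun t =>
    (Measure.tendsto_eval_ae_ae (μ := fun _ : Fin n => volume.restrict (rggSquare n))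
      (i := t)).eventually (ae_restrict_mem (measurableSet_rggSquare n))) _

theorem rggMeasure_forall_not_mem_le {n : ℕ} (hn : 0 < n) {A : Set Pt} (hA : MeasurableSet A)
    (hAQ : A ⊆ rggSquare n) :
    rggMeasure n {x | ∀ t, x t ∉ A} ≤ ENNReal.ofReal (Real.exp (-(volume A).toReal)) := by
  have hAn : volume A ≤ n := volume_rggSquare n ▸ measure_mono hAQ
  have hA_top : volume A ≠ ⊤ := ne_top_of_le_ne_top (ENNReal.natCast_ne_top n) hAn
  have hAn' : (volume A).toReal ≤ n := by
    simpa using ENNReal.toReal_mono (ENNReal.natCast_ne_top n) hAn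
  have hmiss : volume (Aᶜ ∩ rggSquare n) = n - volume A := by
    rw [Set.inter_comm, ← Set.sdiff_eq, measure_sdiff hAQ hA.nullMeasurableSet hA_top,
      volume_rggSquare]
  have hbase : (n : ENNReal)⁻¹ * (n - volume A) = ENNReal.ofReal (1 - (volume A).toReal / n) := by
    have hn' : (0 : ℝ) < n := by exact_mod_cast hn
    rw [← ENNReal.ofReal_toReal hA_top, ← ENNReal.ofReal_natCast, ← ENNReal.ofReal_inv_of_pos hn',
      ← ENNReal.ofReal_sub _ ENNReal.toReal_nonneg, ← ENNReal.ofReal_mul (by positivity),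
      ENNReal.toReal_ofReal ENNReal.toReal_nonneg]
    congr 1
    field_simp
  have hset : {x : Fin n → Pt | ∀ t, x t ∉ A} = Set.univ.pi fun _ => Aᶜ := by
    ext x
    simp
  rw [rggMeasure, Measure.smul_apply, hset, Measure.pi_pi,
    Measure.restrict_apply' (measurableSet_rggSquare n), prod_const, card_univ, Fintype.card_fin,
    smul_eq_mul, ← mul_pow, hmiss, hbase, ← ENNReal.ofReal_pow (by
      rw [sub_nonneg, div_le_one (by exact_mod_cast hn)]; exact hAn')]
  exact ENNReal.ofReal_le_ofReal (Real.one_sub_div_pow_le_exp_neg hAn')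

variable {n m : ℕ} {u : ℝ}

theorem gridCell_subset_rggSquare (hu : 0 ≤ u) (hmu : √n = 2 * m * u) {i j : ℕ} (hi : i < 2 * m)
    (hj : j < 2 * m - 1) : gridCell m u i j ⊆ rggSquare n := by
  rintro p ⟨⟨h₀, h₀'⟩, h₁, h₁'⟩
  have hi' : (i : ℝ) + 1 ≤ 2 * m := by exact_mod_cast hi
  have hj' : (j : ℝ) + 2 ≤ 2 * m := by exact_mod_cast (by omega : j + 2 ≤ 2 * m)
  refine Fin.forall_fin_two.mpr ⟨?_, ?_⟩ <;> rw [hmu, abs_le] <;> constructor <;> nlinarith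

theorem volume_gridCell (hu : 0 ≤ u) (i j : ℕ) :
    volume (gridCell m u i j) = ENNReal.ofReal (2 * u ^ 2) := by
  rw [gridCell, volume_setOf_mem_and_mem, Real.volume_Ico, Real.volume_Ico,
    ← ENNReal.ofReal_mul (by nlinarith)]
  congr 1
  ring

theorem rggMeasure_not_gridHit_le (hm : 0 < m) (hu : 0 < u) (hmu : √n = 2 * m * u) :
    rggMeasure n {x | ¬ GridHit m u x} ≤
      ENNReal.ofReal ((2 * m) ^ 2 * Real.exp (-(2 * u ^ 2))) := by
  have hn : 0 < n := by
    have : 0 < √n := by rw [hmu]; positivity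
    exact_mod_cast Real.sqrt_pos.mp this
  set cells := range (2 * m) ×ˢ range (2 * m - 1)
  have hsub : {x : Fin n → Pt | ¬ GridHit m u x} ⊆
      ⋃ c ∈ cells, {x | ∀ t, x t ∉ gridCell m u c.1 c.2} := by
    intro x hx
    simp only [GridHit, Set.mem_ofPred_eq, not_forall, not_exists] at hx
    obtain ⟨i, hi, j, hj, hmiss⟩ := hx
    exact Set.mem_biUnion (x := (i, j)) (by simp [cells, hi, hj]) hmiss
  have hcount : ((#cells : ℕ) : ℝ) ≤ (2 * m) ^ 2 := by
    rw [card_product, card_range, card_range]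
    exact_mod_cast (show 2 * m * (2 * m - 1) ≤ (2 * m) ^ 2 by
      rw [sq]; exact Nat.mul_le_mul_left _ (Nat.sub_le _ _))
  calc rggMeasure n {x | ¬ GridHit m u x}
      ≤ ∑ c ∈ cells, rggMeasure n {x | ∀ t, x t ∉ gridCell m u c.1 c.2} :=
        (measure_mono hsub).trans (measure_biUnion_finset_le _ _)
    _ ≤ ∑ _c ∈ cells, ENNReal.ofReal (Real.exp (-(2 * u ^ 2))) := by
        refine sum_le_sum fun c hc => ?_
        simp only [cells, mem_product, mem_range] at hc
        have := rggMeasure_forall_not_mem_le hn (A := gridCell m u c.1 c.2)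
          (measurableSet_setOf_mem_and_mem measurableSet_Ico measurableSet_Ico)
          (gridCell_subset_rggSquare hu.le hmu hc.1 hc.2)
        rwa [volume_gridCell hu.le, ENNReal.toReal_ofReal (by positivity)] at this
    _ ≤ ENNReal.ofReal ((2 * m) ^ 2 * Real.exp (-(2 * u ^ 2))) := by
        rw [sum_const, nsmul_eq_mul, ← ENNReal.ofReal_natCast,
          ← ENNReal.ofReal_mul (Nat.cast_nonneg _)]
        gcongr

end Probability

section Asymptotics

theorem tendsto_measure_nhds_one {α : Type*} {l : Filter α} {Ω : α → Type*}
    [∀ a, MeasurableSpace (Ω a)] {μ : ∀ a, Measure (Ω a)} [∀ a, IsProbabilityMeasure (μ a)]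
    {s : ∀ a, Set (Ω a)} {δ : α → ℝ} (hδ : Tendsto δ l (nhds 0))
    (hs : ∀ᶠ a in l, μ a (s a)ᶜ ≤ ENNReal.ofReal (δ a)) :
    Tendsto (fun a => μ a (s a)) l (nhds 1) := by
  have hcompl : Tendsto (fun a => μ a (s a)ᶜ) l (nhds 0) :=
    tendsto_of_tendsto_of_tendsto_of_le_of_le' tendsto_const_nhds
      (by simpa using ENNReal.tendsto_ofReal hδ) (Eventually.of_forall fun _ => zero_le) hs
  have hlower : Tendsto (fun a => 1 - μ a (s a)ᶜ) l (nhds 1) := by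
    simpa using ENNReal.Tendsto.sub tendsto_const_nhds hcompl (Or.inl ENNReal.one_ne_top)
  refine tendsto_of_tendsto_of_tendsto_of_le_of_le hlower tendsto_const_nhds (fun a => ?_)
    fun a => prob_le_one
  rw [tsub_le_iff_right, ← measure_univ (μ := μ a), ← Set.union_compl_self (s a)]
  exact measure_union_le _ _

theorem eventually_sqrt_log_bounds :
    ∀ᶠ n : ℕ in atTop, 4 / 3 ≤ √(Real.log n) ∧ 24 * √(Real.log n) ≤ √n := by
  have hlog := Real.isLittleO_log_id_atTop.bound (by norm_num : (0 : ℝ) < 1 / 576)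
  filter_upwards [tendsto_natCast_atTop_atTop.eventually hlog,
    (Real.tendsto_log_atTop.comp tendsto_natCast_atTop_atTop).eventually_ge_atTop (16 / 9)]
    with n hn hn'
  simp only [Function.comp_apply, id, Real.norm_eq_abs, Nat.abs_cast,
    abs_of_nonneg (Real.log_natCast_nonneg n)] at hn hn'
  constructor
  · rw [Real.le_sqrt (by norm_num) (Real.log_natCast_nonneg n)]
    linarith
  · have h24 : (24 : ℝ) = √576 := by
      rw [show (576 : ℝ) = 24 ^ 2 by norm_num, Real.sqrt_sq (by norm_num)]
    rw [h24, ← Real.sqrt_mul (by norm_num)]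
    exact Real.sqrt_le_sqrt (by linarith)

/-- The grid has `m ≈ √n / (3/2 √(log n))` strips, so that `u ≈ 3/4 √(log n)`: cells of area
`2u² ≥ 9/8 log n` are all hit with high probability, while `11 u < 9.27 √(log n)`. -/
theorem exists_grid_scale {N s : ℝ} (hs : 0 < s) (hN : 24 * s ≤ N) :
    ∃ m : ℕ, ∃ u : ℝ, 2 ≤ m ∧ N = 2 * m * u ∧ 3 / 4 * s ≤ u ∧ u ≤ 4 / 5 * s := by
  have hw : 24 ≤ N / s := (le_div_iff₀ hs).mpr hN
  set m := ⌈5 / 8 * (N / s)⌉₊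
  have hm₁ : 5 / 8 * (N / s) ≤ m := Nat.le_ceil _
  have hm₂ : (m : ℝ) < 5 / 8 * (N / s) + 1 := Nat.ceil_lt_add_one (by positivity)
  have hm : (2 : ℝ) ≤ m := by linarith
  refine ⟨m, N / (2 * m), by exact_mod_cast hm, by field_simp, ?_, ?_⟩
  · rw [le_div_iff₀ (by positivity)]
    have := (le_div_iff₀ hs).mp (show 3 / 2 * (m : ℝ) ≤ N / s by linarith)
    linarith
  · rw [div_le_iff₀ (by positivity)]
    have := (div_le_iff₀ hs).mp (show N / s ≤ 8 / 5 * m by linarith)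
    linarith

theorem sq_mul_exp_le_exp_neg_log {n m : ℕ} {u : ℝ} (hmu : √n = 2 * m * u) (hu : 1 ≤ u)
    (hlog : 3 / 4 * √(Real.log n) ≤ u) :
    (2 * m : ℝ) ^ 2 * Real.exp (-(2 * u ^ 2)) ≤ Real.exp (-(Real.log n / 8)) := by
  have hcount : (2 * m : ℝ) ^ 2 ≤ n := by
    have hsq : (2 * m : ℝ) ^ 2 * u ^ 2 = n := by
      rw [← mul_pow, ← hmu, Real.sq_sqrt (Nat.cast_nonneg n)]
    nlinarith [mul_nonneg (sq_nonneg (2 * m : ℝ)) (sub_nonneg.mpr (one_le_pow₀ (n := 2) hu))]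
  have hexp : Real.exp (-(2 * u ^ 2)) ≤ Real.exp (-(9 / 8 * Real.log n)) := by
    have := pow_le_pow_left₀ (by positivity) hlog 2
    rw [mul_pow, Real.sq_sqrt (Real.log_natCast_nonneg n)] at this
    exact Real.exp_le_exp.mpr (by linarith)
  calc (2 * m : ℝ) ^ 2 * Real.exp (-(2 * u ^ 2))
      ≤ Real.exp (Real.log n) * Real.exp (-(9 / 8 * Real.log n)) :=
        mul_le_mul (hcount.trans (Real.le_exp_log _)) hexp (by positivity) (by positivity)
    _ = Real.exp (-(Real.log n / 8)) := by rw [← Real.exp_add]; ring_nf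

end Asymptotics

theorem rgg_cliqueChromNum_eq_two_dense_general (r : ℕ → ℝ)
    (h : ∀ᶠ n : ℕ in atTop, 9.27 * Real.sqrt (Real.log n) ≤ r n) :
    Tendsto (fun n : ℕ =>
        rggMeasure n {x | cliqueChromNum (geomGraph (r n) x) = 2})
      atTop (nhds 1) := by
  have hδ : Tendsto (fun n : ℕ => Real.exp (-(Real.log n / 8))) atTop (nhds 0) :=
    Real.tendsto_exp_atBot.comp <| tendsto_neg_atTop_atBot.comp <|
      (Real.tendsto_log_atTop.comp tendsto_natCast_atTop_atTop).atTop_div_const (by norm_num)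
  refine tendsto_measure_nhds_one hδ ?_
  filter_upwards [h, eventually_sqrt_log_bounds] with n hrn ⟨hlog, hlogn⟩
  obtain ⟨m, u, hm, hmu, hu_lo, hu_hi⟩ := exists_grid_scale (by positivity) hlogn
  calc rggMeasure n {x | cliqueChromNum (geomGraph (r n) x) = 2}ᶜ
      ≤ rggMeasure n {x | ¬ GridHit m u x} := measure_mono_ae <| by
        filter_upwards [ae_mem_rggSquare n] with x hxQ hx hgrid
        exact hx (cliqueChromNum_eq_two_of_gridHit hm (by linarith) hmu (by linarith) hxQ hgrid)
    _ ≤ ENNReal.ofReal ((2 * m) ^ 2 * Real.exp (-(2 * u ^ 2))) :=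
        rggMeasure_not_gridHit_le (by omega) (by linarith) hmu
    _ ≤ ENNReal.ofReal (Real.exp (-(Real.log n / 8))) :=
        ENNReal.ofReal_le_ofReal (sq_mul_exp_le_exp_neg_log hmu (by linarith) hu_lo)

/-- If eventually `r(n) ≥ 9.27 √(log n)`, then whp `χ_c(G(n, r(n))) = 2`. -/
theorem rgg_cliqueChromNum_eq_two_dense (r : ℕ → ℝ) (hr : ∀ n, 0 < r n)
    (h : ∀ᶠ n : ℕ in atTop, 9.27 * Real.sqrt (Real.log n) ≤ r n) :
    Tendsto (fun n : ℕ =>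
        rggMeasure n {x | cliqueChromNum (geomGraph (r n) x) = 2})
      atTop (nhds 1) :=
  rgg_cliqueChromNum_eq_two_dense_general r h
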